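/- arXiv:1510.00952 — 5 statements merged into one kernel-verified Lean document; each statement's English description precedes it below -/
import Mathlib

section
/- Let n be a positive integer and let w, v : Fin n → ℤ be families of nonzero integers such that the number of indices j with w j < 0 differs from the number of indices j with v j < 0. Then it is impossible that both of the following identities hold in RatFunc ℚ: (i) (∏_{j}(1 − X^{w j}))⁻¹ + (∏_{j}(1 − X^{v j}))⁻¹ = 0, and (ii) (∑_{j} X^{w j}) · (∏_{j}(1 − X^{w j}))⁻¹ + (∑_{j} X^{v j}) · (∏_{j}(1 − X^{v j}))⁻¹ = 0. -/
/-!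
Identity (i) says that the two inverse products are negatives of each other, so (ii) collapses
to `∑ j, X ^ w j = ∑ j, X ^ v j`. Expanded as Laurent series, the coefficient of `X ^ k` on
either side counts the weights equal to `k`; hence `w` and `v` agree as multisets and have the
same number of negative members.
-/

open Finset LaurentSeries HahnSeries

theorem eq_of_inv_add_inv_eq_zero {K : Type*} [Field K] {a b s t : K} (ha : a ≠ 0)
    (h₁ : a⁻¹ + b⁻¹ = 0) (h₂ : s * a⁻¹ + t * b⁻¹ = 0) : s = t := by
  have h : (s - t) * a⁻¹ = 0 := by linear_combination h₂ - t * h₁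
  exact sub_eq_zero.mp ((mul_eq_zero.mp h).resolve_right (inv_ne_zero ha))

theorem Multiset.card_filter_map_univ {α ι : Type*} [Fintype ι] (f : ι → α)
    (p : α → Prop) [DecidablePred p] : card ((univ.val.map f).filter p) = #{i | p (f i)} := by
  rw [Multiset.filter_map, Multiset.card_map]
  rfl

theorem card_filter_eq_of_map_univ_eq {α ι κ : Type*} [Fintype ι] [Fintype κ]
    {f : ι → α} {g : κ → α} (h : univ.val.map f = univ.val.map g)
    (p : α → Prop) [DecidablePred p] : #{i | p (f i)} = #{i | p (g i)} := by
  rw [← Multiset.card_filter_map_univ, h, Multiset.card_filter_map_univ]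

namespace RatFunc

variable {F : Type*} [Field F]

theorem coe_X_zpow (a : ℤ) : (((X : RatFunc F) ^ a : RatFunc F) : F⸨X⸩) = single a 1 := by
  rw [map_zpow₀, coe_X, ← single_zpow]

theorem X_zpow_ne_one {a : ℤ} (ha : a ≠ 0) : (X : RatFunc F) ^ a ≠ 1 := by
  intro h
  have := congrArg (fun f : RatFunc F => (f : F⸨X⸩).coeff a) h
  simp only [coe_X_zpow, map_one, coeff_single_same, coeff_one, if_neg ha] at this
  exact one_ne_zero this

theorem coeff_coe_sum_X_zpow {ι : Type*} [Fintype ι] (u : ι → ℤ) (k : ℤ) :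
    ((∑ j, (X : RatFunc F) ^ u j : RatFunc F) : F⸨X⸩).coeff k = #{j | k = u j} := by
  rw [map_sum, coeff_sum]
  simp only [coe_X_zpow, coeff_single]
  convert (natCast_card_filter _ _).symm

theorem map_univ_eq_of_sum_X_zpow_eq [CharZero F] {ι κ : Type*} [Fintype ι] [Fintype κ]
    {u : ι → ℤ} {u' : κ → ℤ} (h : ∑ j, (X : RatFunc F) ^ u j = ∑ j, (X : RatFunc F) ^ u' j) :
    univ.val.map u = univ.val.map u' := by
  ext k
  have hk := congrArg (fun f : RatFunc F => (f : F⸨X⸩).coeff k) h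
  simp only [coeff_coe_sum_X_zpow, Nat.cast_inj] at hk
  rwa [Multiset.count_map, Multiset.count_map]

end RatFunc

theorem stmt_1_general (n : ℕ) (w v : Fin n → ℤ)
    (hw : ∀ j, w j ≠ 0)
    (hneg : (Finset.univ.filter (fun j => w j < 0)).card ≠
            (Finset.univ.filter (fun j => v j < 0)).card) :
    ¬ ((∏ j, (1 - (RatFunc.X : RatFunc ℚ) ^ (w j)))⁻¹ +
         (∏ j, (1 - (RatFunc.X : RatFunc ℚ) ^ (v j)))⁻¹ = 0 ∧
       (∑ j, (RatFunc.X : RatFunc ℚ) ^ (w j)) *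
           (∏ j, (1 - (RatFunc.X : RatFunc ℚ) ^ (w j)))⁻¹ +
         (∑ j, (RatFunc.X : RatFunc ℚ) ^ (v j)) *
           (∏ j, (1 - (RatFunc.X : RatFunc ℚ) ^ (v j)))⁻¹ = 0) := by
  rintro ⟨h₁, h₂⟩
  have hPw : ∏ j, (1 - (RatFunc.X : RatFunc ℚ) ^ w j) ≠ 0 :=
    prod_ne_zero_iff.mpr fun j _ => sub_ne_zero.mpr (RatFunc.X_zpow_ne_one (hw j)).symm
  have hsum := eq_of_inv_add_inv_eq_zero hPw h₁ h₂
  exact hneg (card_filter_eq_of_map_univ_eq (RatFunc.map_univ_eq_of_sum_X_zpow_eq hsum) (· < 0))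

/-- If two families of nonzero integer weights have different numbers of
negative members, then the two rational-function identities (N⁰ = 0 and
N¹ = 0 from Li's equivariant index theorem) cannot both hold. -/
theorem stmt_1 (n : ℕ) (hn : 0 < n) (w v : Fin n → ℤ)
    (hw : ∀ j, w j ≠ 0) (hv : ∀ j, v j ≠ 0)
    (hneg : (Finset.univ.filter (fun j => w j < 0)).card ≠
            (Finset.univ.filter (fun j => v j < 0)).card) :
    ¬ ((∏ j, (1 - (RatFunc.X : RatFunc ℚ) ^ (w j)))⁻¹ +
         (∏ j, (1 - (RatFunc.X : RatFunc ℚ) ^ (v j)))⁻¹ = 0 ∧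
       (∑ j, (RatFunc.X : RatFunc ℚ) ^ (w j)) *
           (∏ j, (1 - (RatFunc.X : RatFunc ℚ) ^ (w j)))⁻¹ +
         (∑ j, (RatFunc.X : RatFunc ℚ) ^ (v j)) *
           (∏ j, (1 - (RatFunc.X : RatFunc ℚ) ^ (v j)))⁻¹ = 0) :=
  stmt_1_general n w v hw hneg
end

section
/- Let a₁, a₂, a₃, b₁, b₂, b₃ be positive integers such that in RatFunc ℚ one has ((1 − X^{-a₁})(1 − X^{a₂})(1 − X^{a₃}))⁻¹ + ((1 − X^{-b₁})(1 − X^{-b₂})(1 − X^{b₃}))⁻¹ = 0. Then a₁ = b₁ + b₂, b₃ = a₂ + a₃, and the multiset {a₂, a₃} equals the multiset {b₁, b₂}. -/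
/-!
Writing `1 - X⁻ᵃ = -X⁻ᵃ (1 - Xᵃ)` and clearing denominators turns the identity into
`X^(b₁+b₂) ∏ (1 - X^aᵢ) = X^a₁ ∏ (1 - X^bᵢ)` in `ℚ[X]`. Both products have constant term `1`,
so comparing lowest-order terms gives `a₁ = b₁ + b₂`. After cancelling the power of `X`, the
products agree, and `∏ (1 - X^s)` determines the multiset of positive exponents `s`: its least
element `m` is detected by the coefficient of `X^m`, which is `-(multiplicity of m)`. Hence
`{b₁ + b₂, a₂, a₃} = {b₁, b₂, b₃}`, and since `b₁ + b₂` exceeds `b₁` and `b₂`, it must be `b₃`.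
-/

open Polynomial

section

variable {R : Type*} [CommRing R]

noncomputable def prodOneSubXPow (S : Multiset ℕ) : R[X] :=
  (S.map fun s => 1 - X ^ s).prod

theorem prodOneSubXPow_cons (s : ℕ) (S : Multiset ℕ) :
    (prodOneSubXPow (s ::ₘ S) : R[X]) = (1 - X ^ s) * prodOneSubXPow S := by
  simp only [prodOneSubXPow, Multiset.map_cons, Multiset.prod_cons]

theorem prodOneSubXPow_add (S T : Multiset ℕ) :
    (prodOneSubXPow (S + T) : R[X]) = prodOneSubXPow S * prodOneSubXPow T := by
  simp only [prodOneSubXPow, Multiset.map_add, Multiset.prod_add]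

theorem coeff_zero_prodOneSubXPow {S : Multiset ℕ} (hS : ∀ s ∈ S, 0 < s) :
    (prodOneSubXPow S : R[X]).coeff 0 = 1 := by
  rw [prodOneSubXPow, coeff_zero_multiset_prod, Multiset.map_map]
  refine Multiset.prod_eq_one fun c hc => ?_
  obtain ⟨s, hs, rfl⟩ := Multiset.mem_map.mp hc
  simp [coeff_X_pow, (hS s hs).ne]

theorem coeff_prodOneSubXPow_of_forall_le {S : Multiset ℕ} {m : ℕ} (hm : 0 < m)
    (hS : ∀ s ∈ S, m ≤ s) : (prodOneSubXPow S : R[X]).coeff m = -(S.count m : R) := by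
  induction S using Multiset.induction_on with
  | empty => simp [prodOneSubXPow, coeff_one, hm.ne']
  | cons s S ih =>
    have hmS : ∀ s ∈ S, m ≤ s := fun t ht => hS t (Multiset.mem_cons_of_mem ht)
    have hms : m ≤ s := hS s (Multiset.mem_cons_self s S)
    rw [prodOneSubXPow_cons, sub_mul, one_mul, coeff_sub, coeff_X_pow_mul', ih hmS,
      Multiset.count_cons]
    rcases hms.eq_or_lt with rfl | hlt
    · simp [coeff_zero_prodOneSubXPow fun t ht => hm.trans_le (hmS t ht)]
      ring
    · simp [hlt.ne, hlt.not_ge]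

theorem prodOneSubXPow_ne_zero [Nontrivial R] {S : Multiset ℕ} (hS : ∀ s ∈ S, 0 < s) :
    (prodOneSubXPow S : R[X]) ≠ 0 := fun h => by
  simpa [h] using coeff_zero_prodOneSubXPow (R := R) hS

theorem eq_of_prodOneSubXPow_eq [IsDomain R] [CharZero R] {S T : Multiset ℕ}
    (hS : ∀ s ∈ S, 0 < s) (hT : ∀ t ∈ T, 0 < t)
    (h : (prodOneSubXPow S : R[X]) = prodOneSubXPow T) : S = T := by
  refine Multiset.ext.mpr fun m => ?_
  -- By strong induction on `m`, the factors with exponent `< m` agree and can be cancelled.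
  induction m using Nat.strong_induction_on with
  | _ m ih =>
  rcases m.eq_zero_or_pos with rfl | hm
  · rw [Multiset.count_eq_zero.mpr fun h0 => (hS 0 h0).false,
      Multiset.count_eq_zero.mpr fun h0 => (hT 0 h0).false]
  have hlow : S.filter (· < m) = T.filter (· < m) := by
    refine Multiset.ext.mpr fun k => ?_
    simp only [Multiset.count_filter]
    split_ifs with hk
    · exact ih k hk
    · rfl
  have hhigh : (prodOneSubXPow (S.filter (¬ · < m)) : R[X]) =
      prodOneSubXPow (T.filter (¬ · < m)) := by
    refine mul_left_cancel₀ (prodOneSubXPow_ne_zero (R := R) (S := S.filter (· < m))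
      fun s hs => hS s (Multiset.mem_of_mem_filter hs)) ?_
    rw [← prodOneSubXPow_add, Multiset.filter_add_not, hlow, ← prodOneSubXPow_add,
      Multiset.filter_add_not, h]
  have hcoeff := congrArg (coeff · m) hhigh
  rwa [coeff_prodOneSubXPow_of_forall_le hm (by simp +contextual),
    coeff_prodOneSubXPow_of_forall_le hm (by simp +contextual), neg_inj, Nat.cast_inj,
    Multiset.count_filter_of_pos (p := (¬ · < m)) (lt_irrefl m),
    Multiset.count_filter_of_pos (p := (¬ · < m)) (lt_irrefl m)]
    at hcoeff

theorem eq_of_X_pow_mul_eq_X_pow_mul {p q : R[X]} {m n : ℕ} (hp : p.coeff 0 ≠ 0)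
    (hq : q.coeff 0 ≠ 0) (h : X ^ m * p = X ^ n * q) : m = n := by
  have hp0 : p ≠ 0 := fun h0 => hp (by simp [h0])
  have hq0 : q ≠ 0 := fun h0 => hq (by simp [h0])
  have := congrArg natTrailingDegree h
  rwa [mul_comm, natTrailingDegree_mul_X_pow hp0, mul_comm, natTrailingDegree_mul_X_pow hq0,
    natTrailingDegree_eq_zero.mpr (.inr hp), natTrailingDegree_eq_zero.mpr (.inr hq),
    zero_add, zero_add] at this

theorem X_pow_mul_prodOneSubXPow_eq {K : Type*} [Field K] {a₁ a₂ a₃ b₁ b₂ b₃ : ℕ}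
    (h : ((1 - ((RatFunc.X : RatFunc K) ^ a₁)⁻¹) * (1 - RatFunc.X ^ a₂) *
        (1 - RatFunc.X ^ a₃))⁻¹ +
      ((1 - ((RatFunc.X : RatFunc K) ^ b₁)⁻¹) * (1 - (RatFunc.X ^ b₂)⁻¹) *
        (1 - RatFunc.X ^ b₃))⁻¹ = 0) :
    X ^ (b₁ + b₂) * prodOneSubXPow {a₁, a₂, a₃} =
      X ^ a₁ * (prodOneSubXPow {b₁, b₂, b₃} : K[X]) := by
  rw [add_eq_zero_iff_eq_neg, ← inv_neg, inv_inj] at h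
  have hX : (RatFunc.X : RatFunc K) ≠ 0 := RatFunc.X_ne_zero
  field_simp at h
  apply RatFunc.algebraMap_injective K
  simp only [prodOneSubXPow, Multiset.insert_eq_cons, Multiset.map_cons, Multiset.map_singleton,
    Multiset.prod_cons, Multiset.prod_singleton, map_mul, map_pow, RatFunc.algebraMap_X, map_sub,
    map_one]
  linear_combination -h

end

theorem eq_add_and_pair_eq_of_triple_eq {a b c d e : ℕ} (ha : 0 < a) (hb : 0 < b)
    (h : ({a + b, c, d} : Multiset ℕ) = {a, b, e}) :
    e = a + b ∧ ({c, d} : Multiset ℕ) = {a, b} := by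
  have he : e = a + b := by
    have hmem : a + b ∈ ({a, b, e} : Multiset ℕ) := h ▸ Multiset.mem_cons_self _ _
    simp only [Multiset.insert_eq_cons, Multiset.mem_cons, Multiset.mem_singleton] at hmem
    omega
  subst he
  refine ⟨rfl, (Multiset.cons_inj_right (a + b)).mp ?_⟩
  simp only [Multiset.insert_eq_cons, ← Multiset.singleton_add] at h ⊢
  rw [h]
  abel

/-- The 6-dimensional case of Theorem 2.6: the equation N⁰ = 0 for weights
{−a₁, a₂, a₃} and {−b₁, −b₂, b₃} forces a₁ = b₁ + b₂, b₃ = a₂ + a₃ and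
{a₂, a₃} = {b₁, b₂}. -/
theorem stmt_2 (a₁ a₂ a₃ b₁ b₂ b₃ : ℤ)
    (ha₁ : 0 < a₁) (ha₂ : 0 < a₂) (ha₃ : 0 < a₃)
    (hb₁ : 0 < b₁) (hb₂ : 0 < b₂) (hb₃ : 0 < b₃)
    (h : ((1 - (RatFunc.X : RatFunc ℚ) ^ (-a₁)) *
            (1 - (RatFunc.X : RatFunc ℚ) ^ a₂) *
            (1 - (RatFunc.X : RatFunc ℚ) ^ a₃))⁻¹ +
         ((1 - (RatFunc.X : RatFunc ℚ) ^ (-b₁)) *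
            (1 - (RatFunc.X : RatFunc ℚ) ^ (-b₂)) *
            (1 - (RatFunc.X : RatFunc ℚ) ^ b₃))⁻¹ = 0) :
    a₁ = b₁ + b₂ ∧ b₃ = a₂ + a₃ ∧ ({a₂, a₃} : Multiset ℤ) = {b₁, b₂} := by
  lift a₁ to ℕ using ha₁.le
  lift a₂ to ℕ using ha₂.le
  lift a₃ to ℕ using ha₃.le
  lift b₁ to ℕ using hb₁.le
  lift b₂ to ℕ using hb₂.le
  lift b₃ to ℕ using hb₃.le
  simp only [Nat.cast_pos] at ha₁ ha₂ ha₃ hb₁ hb₂ hb₃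
  simp only [zpow_neg, zpow_natCast] at h
  have hA : ∀ s ∈ ({a₁, a₂, a₃} : Multiset ℕ), 0 < s := by
    simp [or_imp, forall_and, ha₁, ha₂, ha₃]
  have hB : ∀ s ∈ ({b₁, b₂, b₃} : Multiset ℕ), 0 < s := by
    simp [or_imp, forall_and, hb₁, hb₂, hb₃]
  have hpoly := X_pow_mul_prodOneSubXPow_eq h
  obtain rfl : a₁ = b₁ + b₂ :=
    (eq_of_X_pow_mul_eq_X_pow_mul (by rw [coeff_zero_prodOneSubXPow hA]; exact one_ne_zero)
      (by rw [coeff_zero_prodOneSubXPow hB]; exact one_ne_zero) hpoly).symm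
  have hprod := mul_left_cancel₀ (pow_ne_zero _ X_ne_zero) hpoly
  obtain ⟨rfl, hpair⟩ := eq_add_and_pair_eq_of_triple_eq hb₁ hb₂
    (eq_of_prodOneSubXPow_eq hA hB hprod)
  refine ⟨Nat.cast_add b₁ b₂, ?_, by simpa using congrArg (Multiset.map ((↑) : ℕ → ℤ)) hpair⟩
  have := congrArg Multiset.sum hpair
  simp only [Multiset.insert_eq_cons, Multiset.sum_cons, Multiset.sum_singleton] at this
  omega
end

section
/- Let s and t be multisets of positive natural numbers. If ∏_{a ∈ s}(1 − X^a) = ∏_{b ∈ t}(1 − X^b) in the polynomial ring ℤ[X], then s = t. -/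
/-! Compare the multiplicity of each exponent `m` by strong induction on `m`. Once the exponents
below `m` are known to agree, their product (constant term `1`, hence nonzero) cancels from both
sides; every remaining exponent is at least `m`, so the coefficient of `X ^ m` in what remains is
minus the multiplicity of `m`. -/

open Polynomial

namespace Polynomial

variable (R : Type*) [CommRing R]

noncomputable def prodOneSubXPow (s : Multiset ℕ) : R[X] :=
  (s.map fun a => 1 - X ^ a).prod

variable {R}

theorem prodOneSubXPow_add (s t : Multiset ℕ) :
    prodOneSubXPow R (s + t) = prodOneSubXPow R s * prodOneSubXPow R t := by
  simp [prodOneSubXPow]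

theorem eval_zero_prodOneSubXPow {s : Multiset ℕ} (hs : ∀ a ∈ s, a ≠ 0) :
    (prodOneSubXPow R s).eval 0 = 1 := by
  rw [prodOneSubXPow, eval_multiset_prod, Multiset.map_map]
  refine Multiset.prod_eq_one fun x hx => ?_
  obtain ⟨a, ha, rfl⟩ := Multiset.mem_map.mp hx
  simp [hs a ha]

theorem prodOneSubXPow_ne_zero [Nontrivial R] {s : Multiset ℕ} (hs : ∀ a ∈ s, a ≠ 0) :
    prodOneSubXPow R s ≠ 0 := fun h0 => by
  simpa [h0] using eval_zero_prodOneSubXPow (R := R) hs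

theorem coeff_prodOneSubXPow_of_forall_le {s : Multiset ℕ} {m : ℕ} (hm : m ≠ 0)
    (hs : ∀ a ∈ s, m ≤ a) : (prodOneSubXPow R s).coeff m = -(s.count m : R) := by
  induction s using Multiset.induction_on with
  | empty => simp [prodOneSubXPow, coeff_one, hm]
  | cons a s ih =>
    have hs' : ∀ b ∈ s, m ≤ b := fun b hb => hs b (Multiset.mem_cons_of_mem hb)
    have hma : m ≤ a := hs a (Multiset.mem_cons_self a s)
    rw [← Multiset.singleton_add, prodOneSubXPow_add, Multiset.count_add]
    simp only [prodOneSubXPow, Multiset.map_singleton, Multiset.prod_singleton]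
    rw [sub_mul, one_mul, coeff_sub, ← prodOneSubXPow, ih hs', coeff_X_pow_mul']
    rcases hma.eq_or_lt with rfl | hlt
    · have hs0 : ∀ b ∈ s, b ≠ 0 := fun b hb => (hm.bot_lt.trans_le (hs' b hb)).ne'
      simp [coeff_zero_eq_eval_zero, eval_zero_prodOneSubXPow hs0]
      ring
    · simp [hlt.not_ge, hlt.ne]

theorem eq_of_prodOneSubXPow_eq [IsDomain R] [CharZero R] {s t : Multiset ℕ}
    (hs : ∀ a ∈ s, a ≠ 0) (ht : ∀ b ∈ t, b ≠ 0)
    (h : prodOneSubXPow R s = prodOneSubXPow R t) : s = t := by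
  refine Multiset.ext.mpr fun m => ?_
  induction m using Nat.strong_induction_on with
  | _ m IH =>
  rcases eq_or_ne m 0 with rfl | hm
  · rw [Multiset.count_eq_zero.mpr fun h0 => hs 0 h0 rfl,
      Multiset.count_eq_zero.mpr fun h0 => ht 0 h0 rfl]
  have hlow : s.filter (· < m) = t.filter (· < m) := Multiset.ext.mpr fun k => by
    simp only [Multiset.count_filter]
    split_ifs with hk
    exacts [IH k hk, rfl]
  have hhigh : prodOneSubXPow R (s.filter fun a => ¬a < m) =
      prodOneSubXPow R (t.filter fun a => ¬a < m) := by
    rw [← Multiset.filter_add_not (· < m) s, ← Multiset.filter_add_not (· < m) t, hlow,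
      prodOneSubXPow_add, prodOneSubXPow_add] at h
    exact mul_left_cancel₀
      (prodOneSubXPow_ne_zero fun a ha => ht a (Multiset.mem_of_mem_filter ha)) h
  have hcoeff (u : Multiset ℕ) :
      (prodOneSubXPow R (u.filter fun a => ¬a < m)).coeff m = -(u.count m : R) := by
    rw [coeff_prodOneSubXPow_of_forall_le hm fun a ha => not_lt.mp (Multiset.mem_filter.mp ha).2,
      Multiset.count_filter_of_pos (p := fun a => ¬a < m) (lt_irrefl m)]
  simpa only [hcoeff, neg_inj, Nat.cast_inj] using congrArg (coeff · m) hhigh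

end Polynomial

/-- If ∏_{a ∈ s}(1 − X^a) = ∏_{b ∈ t}(1 − X^b) in ℤ[X], with s, t multisets of
positive natural numbers, then s = t. -/
theorem stmt_5 (s t : Multiset ℕ)
    (hs : ∀ a ∈ s, 0 < a) (ht : ∀ b ∈ t, 0 < b)
    (h : (s.map (fun a => 1 - (X : ℤ[X]) ^ a)).prod =
         (t.map (fun b => 1 - (X : ℤ[X]) ^ b)).prod) :
    s = t :=
  eq_of_prodOneSubXPow_eq (fun a ha => (hs a ha).ne') (fun b hb => (ht b hb).ne') h
end

section
/- Let a₂, a₃, b₁, b₂, b₃ be positive integers. If (1 − X^{b₁+b₂})(1 − X^{a₂})(1 − X^{a₃}) = (1 − X^{b₁})(1 − X^{b₂})(1 − X^{b₃}) in the polynomial ring ℤ[X], then the multiset {a₂, a₃} equals the multiset {b₁, b₂}, and b₃ = a₂ + a₃. -/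
/-!
Every factor `1 - X ^ a` with `a > 0` has constant term `1`, so the lowest non-constant term of
`∏ (1 - X ^ a)` is `-c X ^ m`, where `m` is the smallest exponent and `c` its multiplicity.
Cancelling one factor `1 - X ^ m` and inducting, such a product determines its multiset of
exponents. Hence `{b₁ + b₂, a₂, a₃} = {b₁, b₂, b₃}`; since `b₁ + b₂` exceeds `b₁` and `b₂`, it is
`b₃`, and the remaining exponents agree.
-/

open Polynomial

variable {R : Type*} [CommRing R]

theorem one_sub_X_pow_ne_zero [Nontrivial R] {a : ℕ} (ha : 0 < a) : (1 - X ^ a : R[X]) ≠ 0 := by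
  rw [← neg_sub, neg_ne_zero, ← C_1]
  exact X_pow_sub_C_ne_zero ha 1

theorem coeff_zero_prod_one_sub_X_pow {s : Multiset ℕ} (hs : ∀ a ∈ s, 0 < a) :
    (s.map fun a => (1 - X ^ a : R[X])).prod.coeff 0 = 1 := by
  rw [coeff_zero_eq_eval_zero, eval_multiset_prod, Multiset.map_map]
  refine Multiset.prod_eq_one fun x hx => ?_
  obtain ⟨a, ha, rfl⟩ := Multiset.mem_map.mp hx
  simp [(hs a ha).ne']

theorem coeff_prod_one_sub_X_pow_of_le {s : Multiset ℕ} {m : ℕ} (hm : 0 < m)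
    (hs : ∀ a ∈ s, m ≤ a) :
    (s.map fun a => (1 - X ^ a : R[X])).prod.coeff m = -(s.count m : R) := by
  induction s using Multiset.induction_on with
  | empty => simp [coeff_one, hm.ne']
  | cons a s ih =>
    have hsa : ∀ b ∈ s, m ≤ b := fun b hb => hs b (Multiset.mem_cons_of_mem hb)
    have hma : m ≤ a := hs a (Multiset.mem_cons_self a s)
    rw [Multiset.map_cons, Multiset.prod_cons, sub_mul, one_mul, coeff_sub, coeff_X_pow_mul',
      ih hsa, Multiset.count_cons]
    rcases hma.eq_or_lt with rfl | hlt
    · rw [if_pos le_rfl, Nat.sub_self, if_pos rfl,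
        coeff_zero_prod_one_sub_X_pow fun b hb => hm.trans_le (hsa b hb)]
      push_cast
      ring
    · simp [hlt.ne, hlt.not_ge]

theorem prod_one_sub_X_pow_injective [IsDomain R] [CharZero R] {s t : Multiset ℕ}
    (hs : ∀ a ∈ s, 0 < a) (ht : ∀ b ∈ t, 0 < b)
    (h : (s.map fun a => (1 - X ^ a : R[X])).prod = (t.map fun b => (1 - X ^ b : R[X])).prod) :
    s = t := by
  induction hcard : Multiset.card (s + t) using Nat.strong_induction_on generalizing s t with
  | _ n ih =>
  rcases (s + t).empty_or_exists_mem with hst | ⟨c, hc⟩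
  · obtain ⟨rfl, rfl⟩ := add_eq_zero.mp hst
    rfl
  obtain ⟨m, hm, hmin⟩ := (s + t).toFinset.exists_min_image id ⟨c, Multiset.mem_toFinset.mpr hc⟩
  rw [Multiset.mem_toFinset] at hm
  have hle : ∀ a ∈ s + t, m ≤ a := fun a ha => hmin a (Multiset.mem_toFinset.mpr ha)
  have hpos : 0 < m := by
    rcases Multiset.mem_add.mp hm with hm | hm
    exacts [hs m hm, ht m hm]
  have hcount : s.count m = t.count m := by
    have := congrArg (coeff · m) h
    rwa [coeff_prod_one_sub_X_pow_of_le hpos fun a ha => hle a (Multiset.mem_add.mpr (.inl ha)),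
      coeff_prod_one_sub_X_pow_of_le hpos fun b hb => hle b (Multiset.mem_add.mpr (.inr hb)),
      neg_inj, Nat.cast_inj] at this
  have hmst : m ∈ s ∧ m ∈ t := by
    have := Multiset.count_pos.mpr hm
    rw [Multiset.count_add] at this
    rw [← Multiset.count_pos, ← Multiset.count_pos]
    omega
  rw [← Multiset.cons_erase hmst.1, ← Multiset.cons_erase hmst.2] at h hcard ⊢
  rw [Multiset.map_cons, Multiset.map_cons, Multiset.prod_cons, Multiset.prod_cons] at h
  have hs' : ∀ a ∈ s.erase m, 0 < a := fun a ha => hs a (Multiset.mem_of_mem_erase ha)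
  have ht' : ∀ b ∈ t.erase m, 0 < b := fun b hb => ht b (Multiset.mem_of_mem_erase hb)
  rw [ih _ (by simp [← hcard]) hs' ht' (mul_left_cancel₀ (one_sub_X_pow_ne_zero hpos) h) rfl]

/-- If (1 − X^{b₁+b₂})(1 − X^{a₂})(1 − X^{a₃}) = (1 − X^{b₁})(1 − X^{b₂})(1 − X^{b₃})
in ℤ[X], with all the exponents positive, then {a₂, a₃} = {b₁, b₂} and
b₃ = a₂ + a₃. -/
theorem stmt_6 (a₂ a₃ b₁ b₂ b₃ : ℕ)
    (ha₂ : 0 < a₂) (ha₃ : 0 < a₃) (hb₁ : 0 < b₁) (hb₂ : 0 < b₂) (hb₃ : 0 < b₃)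
    (h : (1 - (X : ℤ[X]) ^ (b₁ + b₂)) * (1 - (X : ℤ[X]) ^ a₂) *
           (1 - (X : ℤ[X]) ^ a₃) =
         (1 - (X : ℤ[X]) ^ b₁) * (1 - (X : ℤ[X]) ^ b₂) *
           (1 - (X : ℤ[X]) ^ b₃)) :
    ({a₂, a₃} : Multiset ℕ) = {b₁, b₂} ∧ b₃ = a₂ + a₃ := by
  have hexps : ({b₁ + b₂, a₂, a₃} : Multiset ℕ) = {b₁, b₂, b₃} := by
    refine prod_one_sub_X_pow_injective (R := ℤ) ?_ ?_ (by simpa [mul_assoc] using h)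
    · simp only [Multiset.insert_eq_cons, Multiset.mem_cons, Multiset.mem_singleton]
      omega
    · simp only [Multiset.insert_eq_cons, Multiset.mem_cons, Multiset.mem_singleton]
      omega
  have hb₃_eq : b₃ = b₁ + b₂ := by
    have hmem : b₁ + b₂ ∈ ({b₁, b₂, b₃} : Multiset ℕ) := hexps ▸ Multiset.mem_cons_self _ _
    simp only [Multiset.insert_eq_cons, Multiset.mem_cons, Multiset.mem_singleton] at hmem
    omega
  have hpair : ({a₂, a₃} : Multiset ℕ) = {b₁, b₂} := by
    have hrotate : ({b₁, b₂, b₁ + b₂} : Multiset ℕ) = (b₁ + b₂) ::ₘ {b₁, b₂} := by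
      rw [Multiset.pair_comm b₂]
      exact Multiset.cons_swap b₁ (b₁ + b₂) {b₂}
    rw [hb₃_eq, hrotate] at hexps
    exact (Multiset.cons_inj_right _).mp hexps
  have hsum := congrArg Multiset.sum hpair
  simp only [Multiset.insert_eq_cons, Multiset.sum_cons, Multiset.sum_singleton] at hsum
  exact ⟨hpair, by omega⟩
end

section
/- Let n be a natural number and let N : ℕ → ℕ be a function satisfying: N i = N (n − i) for every i ≤ n; N i = 0 for every i > n; ∑_{i=0}^{n} N i = 3; and there exists an index i with N i ≠ 0 and N (i+1) ≠ 0. Then n is even, n ≥ 2, and N (n/2 − 1) = 1, N (n/2) = 1, and N (n/2 + 1) = 1. -/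
/-! If `N` has consecutive nonzero values at `i` and `i + 1`, symmetry about `n / 2` makes it
nonzero at `n - i - 1` and `n - i` too, and a total of `3` leaves room for at most three nonzero
values, so two of these four points coincide. For odd `n` the reflection `j ↦ n - j` pairs off
the terms of the sum, which would make the total even; hence `n = 2m` and the four points
collapse to `m - 1, m, m + 1`, each carrying the value `1`. -/

open Finset

section Support

variable {ι : Type*} {s t : Finset ι} {f : ι → ℕ}

lemma card_le_sum_of_subset_of_ne_zero (hts : t ⊆ s) (hf : ∀ x ∈ t, f x ≠ 0) :
    #t ≤ ∑ x ∈ s, f x :=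
  calc #t = ∑ _x ∈ t, 1 := card_eq_sum_ones t
    _ ≤ ∑ x ∈ t, f x := sum_le_sum fun x hx => Nat.one_le_iff_ne_zero.2 (hf x hx)
    _ ≤ ∑ x ∈ s, f x := sum_le_sum_of_subset hts

lemma eq_one_of_sum_eq_card (hts : t ⊆ s) (hf : ∀ x ∈ t, f x ≠ 0)
    (hsum : ∑ x ∈ s, f x = #t) : ∀ x ∈ t, f x = 1 := by
  have hle : ∀ x ∈ t, 1 ≤ f x := fun x hx => Nat.one_le_iff_ne_zero.2 (hf x hx)
  have heq : ∑ _x ∈ t, 1 = ∑ x ∈ t, f x :=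
    le_antisymm (sum_le_sum hle) <|
      calc ∑ x ∈ t, f x ≤ ∑ x ∈ s, f x := sum_le_sum_of_subset hts
        _ = ∑ _x ∈ t, 1 := by rw [hsum, card_eq_sum_ones]
  intro x hx
  exact ((sum_eq_sum_iff_of_le hle).1 heq x hx).symm

end Support

lemma even_sum_range_of_symm_of_odd {n : ℕ} {N : ℕ → ℕ}
    (hsym : ∀ i ≤ n, N i = N (n - i)) (hn : Odd n) : Even (∑ i ∈ range (n + 1), N i) := by
  rw [← ZMod.natCast_eq_zero_iff_even, Nat.cast_sum]
  refine sum_involution (fun j _ => n - j) (fun j hj => ?_) (fun j hj _ => ?_)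
    (fun j _ => by simp only [mem_range]; omega) (fun j hj => ?_)
  · rw [← hsym j (by simp only [mem_range] at hj; omega), ← two_mul]
    exact mul_eq_zero_of_left (ZMod.natCast_self 2) _
  · obtain ⟨k, rfl⟩ := hn
    omega
  · simp only [mem_range] at hj
    omega

section Points

variable {n : ℕ} {N : ℕ → ℕ}

lemma not_four_ne_zero_of_sum_eq_three (hsum : ∑ i ∈ range (n + 1), N i = 3)
    {a b c d : ℕ} (hab : a < b) (hbc : b < c) (hcd : c < d) (hdn : d ≤ n)
    (ha : N a ≠ 0) (hb : N b ≠ 0) (hc : N c ≠ 0) (hd : N d ≠ 0) : False := by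
  have hcard : #{a, b, c, d} = 4 := by
    rw [card_insert_of_notMem (by simp only [mem_insert, mem_singleton]; omega),
      card_insert_of_notMem (by simp only [mem_insert, mem_singleton]; omega), card_pair (by omega)]
  have := card_le_sum_of_subset_of_ne_zero (s := range (n + 1)) (t := {a, b, c, d}) (f := N)
    (by intro x; simp only [mem_insert, mem_singleton, mem_range]; omega)
    (by simp only [mem_insert, mem_singleton]; rintro x (rfl | rfl | rfl | rfl) <;> assumption)
  omega

lemma eq_one_of_three_ne_zero_of_sum_eq_three (hsum : ∑ i ∈ range (n + 1), N i = 3)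
    {a b c : ℕ} (hab : a < b) (hbc : b < c) (hcn : c ≤ n)
    (ha : N a ≠ 0) (hb : N b ≠ 0) (hc : N c ≠ 0) : N a = 1 ∧ N b = 1 ∧ N c = 1 := by
  have hcard : #{a, b, c} = 3 := by
    rw [card_insert_of_notMem (by simp only [mem_insert, mem_singleton]; omega),
      card_pair (by omega)]
  have := eq_one_of_sum_eq_card (s := range (n + 1)) (t := {a, b, c}) (f := N)
    (by intro x; simp only [mem_insert, mem_singleton, mem_range]; omega)
    (by simp only [mem_insert, mem_singleton]; rintro x (rfl | rfl | rfl) <;> assumption)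
    (by rw [hsum, hcard])
  exact ⟨this a (by simp), this b (by simp), this c (by simp)⟩

end Points

/-- The three-fixed-point combinatorics: if N is symmetric about n/2, vanishes
above n, sums to 3, and has two consecutive nonzero values, then n is even,
n ≥ 2, and N (n/2 − 1) = N (n/2) = N (n/2 + 1) = 1. -/
theorem stmt_10 (n : ℕ) (N : ℕ → ℕ)
    (hsym : ∀ i ≤ n, N i = N (n - i))
    (hzero : ∀ i, n < i → N i = 0)
    (hsum : ∑ i ∈ Finset.range (n + 1), N i = 3)
    (hconsec : ∃ i, N i ≠ 0 ∧ N (i + 1) ≠ 0) :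
    Even n ∧ 2 ≤ n ∧ N (n / 2 - 1) = 1 ∧ N (n / 2) = 1 ∧ N (n / 2 + 1) = 1 := by
  obtain ⟨i, hi, hi1⟩ := hconsec
  have hin : i + 1 ≤ n := by by_contra h; exact hi1 (hzero _ (by omega))
  have hrefl : ∀ j ≤ n, N j ≠ 0 → N (n - j) ≠ 0 := fun j hj h => hsym j hj ▸ h
  have heven : Even n := (Nat.even_or_odd n).resolve_right fun hodd =>
    absurd (hsum ▸ even_sum_range_of_symm_of_odd hsym hodd) (by decide)
  obtain ⟨m, rfl⟩ := heven
  have hi' := hrefl i (by omega) hi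
  have hi1' := hrefl (i + 1) hin hi1
  have hcentre : i + 1 = m ∨ i = m := by
    by_contra! h
    rcases Nat.lt_or_gt_of_ne h.1 with hlt | hgt
    · exact not_four_ne_zero_of_sum_eq_three hsum (by omega) (by omega) (by omega) (by omega)
        hi hi1 hi1' hi'
    · exact not_four_ne_zero_of_sum_eq_three hsum (by omega) (by omega) (by omega) hin
        hi1' hi' hi hi1
  obtain ⟨hlow, hmid, hhigh⟩ : N (m - 1) ≠ 0 ∧ N m ≠ 0 ∧ N (m + 1) ≠ 0 := by
    rcases hcentre with rfl | rfl
    · exact ⟨hi, hi1, by convert hi' using 2; omega⟩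
    · exact ⟨by convert hi1' using 2; omega, hi, hi1⟩
  obtain ⟨h1, h2, h3⟩ :=
    eq_one_of_three_ne_zero_of_sum_eq_three hsum (by omega) (by omega) (by omega) hlow hmid hhigh
  rw [show (m + m) / 2 = m by omega]
  exact ⟨⟨m, rfl⟩, by omega, h1, h2, h3⟩
end
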